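/- arXiv:1507.08752 — 3 statements merged into one kernel-verified Lean document; each statement's English description precedes it below -/
import Mathlib

section
/- If u is uniformly distributed on the Euclidean unit sphere in R^d with d > 1, then (E[||u||_∞^4])^{1/4} ≤ c sqrt(log(d)/d) for a positive numerical constant c independent of d. -/
/-!
Isometry invariance makes `∫ ⟪v, u⟫ ^ n ∂μ` equal to `‖v‖ ^ n` times a constant. For orthonormal
`a, b`, comparing the coefficients of `s ^ 2` on both sides of
`∫ ⟪a + s • b, u⟫ ^ (2k+2) = (1 + s ^ 2) ^ (k+1) ∫ ⟪a, u⟫ ^ (2k+2)` gives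
`(2k+1) E[⟪a,u⟫^(2k) ⟪b,u⟫^2] = E[⟪a,u⟫^(2k+2)]`; summing `⟪b j, u⟫ ^ 2 = ‖u‖ ^ 2 = 1` over an
orthonormal basis then yields `(d + 2k) m_(k+1) = (2k+1) m_k` for the coordinate moments
`m_k = E[u_i^(2k)]`, so `m_k ≤ (2k/d)^k`. Since `‖u‖_∞^(2k) ≤ ∑ i, u_i^(2k)`, Jensen gives
`(E‖u‖_∞⁴)^m ≤ d (4m/d)^(2m)`, and the choice `m = ⌈log d⌉` absorbs the factor `d`.
-/

open MeasureTheory Real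
open scoped RealInnerProductSpace Polynomial

section Invariant

variable {E : Type*} [NormedAddCommGroup E] [InnerProductSpace ℝ E] [MeasurableSpace E]
  [BorelSpace E] {μ : Measure E}

def IsIsometryInvariant (μ : Measure E) : Prop := ∀ T : E ≃ₗᵢ[ℝ] E, μ.map T = μ

theorem IsIsometryInvariant.integral_comp (hμ : IsIsometryInvariant μ) (T : E ≃ₗᵢ[ℝ] E)
    (g : E → ℝ) : ∫ u, g (T u) ∂μ = ∫ u, g u ∂μ := by
  conv_rhs => rw [← hμ T]
  exact (integral_map_equiv T.toHomeomorph.toMeasurableEquiv g).symm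

theorem IsIsometryInvariant.integral_comp_inner (hμ : IsIsometryInvariant μ) {a b : E}
    (hab : ‖a‖ = ‖b‖) (g : ℝ → ℝ) : ∫ u, g ⟪b, u⟫ ∂μ = ∫ u, g ⟪a, u⟫ ∂μ := by
  set T := Submodule.reflection (ℝ ∙ (a - b))ᗮ
  have hTa : T a = b := Submodule.reflection_sub hab
  calc ∫ u, g ⟪b, u⟫ ∂μ = ∫ u, g ⟪T a, T u⟫ ∂μ := by
        rw [← hμ.integral_comp T, hTa]
    _ = ∫ u, g ⟪a, u⟫ ∂μ := by simp_rw [LinearIsometryEquiv.inner_map_map]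

theorem IsIsometryInvariant.integral_inner_pow (hμ : IsIsometryInvariant μ) {a : E}
    (ha : ‖a‖ = 1) (v : E) (n : ℕ) :
    ∫ u, ⟪v, u⟫ ^ n ∂μ = ‖v‖ ^ n * ∫ u, ⟪a, u⟫ ^ n ∂μ := by
  rcases eq_or_ne v 0 with rfl | hv
  · rcases n with _ | n <;> simp
  have hv' : ‖(‖v‖⁻¹ • v)‖ = ‖a‖ := by
    rw [norm_smul, norm_inv, norm_norm, inv_mul_cancel₀ (norm_ne_zero_iff.mpr hv), ha]
  have hunit := hμ.integral_comp_inner hv' (· ^ n)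
  rw [hunit, ← integral_const_mul]
  congr 1 with u
  rw [inner_smul_left, mul_pow, ← mul_assoc, ← mul_pow]
  simp [hv]

theorem integrable_inner_pow_mul_inner_pow [IsFiniteMeasure μ] (hμ1 : ∀ᵐ u ∂μ, ‖u‖ ≤ 1)
    (a b : E) (m n : ℕ) : Integrable (fun u ↦ ⟪a, u⟫ ^ m * ⟪b, u⟫ ^ n) μ := by
  refine Integrable.of_bound (by fun_prop) (‖a‖ ^ m * ‖b‖ ^ n) ?_
  filter_upwards [hμ1] with u hu
  have hinner (c : E) : ‖⟪c, u⟫‖ ≤ ‖c‖ :=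
    (norm_inner_le_norm c u).trans (mul_le_of_le_one_right (norm_nonneg c) hu)
  rw [norm_mul, norm_pow, norm_pow]
  gcongr <;> exact hinner _

theorem Polynomial.coeff_two_one_add_X_sq_pow {R : Type*} [CommSemiring R] (m : ℕ) :
    ((1 + X ^ 2 : R[X]) ^ m).coeff 2 = m := by
  have hexpand : (1 + X ^ 2 : R[X]) ^ m = expand R 2 ((1 + X) ^ m) := by simp
  have hcoeff := coeff_expand_mul (p := 2) two_pos ((1 + X : R[X]) ^ m) 1
  rw [one_mul] at hcoeff
  rw [hexpand, hcoeff, coeff_one_add_X_pow, Nat.choose_one_right]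

theorem IsIsometryInvariant.two_mul_add_one_mul_integral_inner_pow_mul_inner_sq
    [IsFiniteMeasure μ] (hμ : IsIsometryInvariant μ) (hμ1 : ∀ᵐ u ∂μ, ‖u‖ ≤ 1) {a b : E}
    (ha : ‖a‖ = 1) (hb : ‖b‖ = 1) (hab : ⟪a, b⟫ = 0) (k : ℕ) :
    (2 * k + 1) * ∫ u, ⟪a, u⟫ ^ (2 * k) * ⟪b, u⟫ ^ 2 ∂μ = ∫ u, ⟪a, u⟫ ^ (2 * k + 2) ∂μ := by
  set n := 2 * k + 2
  set I : ℕ → ℝ := fun j ↦ ∫ u, ⟪a, u⟫ ^ (n - j) * ⟪b, u⟫ ^ j ∂μ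
  have heval (s : ℝ) : ∑ j ∈ Finset.range (n + 1), n.choose j * I j * s ^ j
      = (∫ u, ⟪a, u⟫ ^ n ∂μ) * (1 + s ^ 2) ^ (k + 1) := by
    have hnorm : ‖a + s • b‖ ^ n = (1 + s ^ 2) ^ (k + 1) := by
      rw [show n = 2 * (k + 1) by omega, pow_mul, norm_add_sq_real, inner_smul_right, hab,
        norm_smul, ha, hb, norm_eq_abs, mul_one, sq_abs]
      ring
    calc ∑ j ∈ Finset.range (n + 1), n.choose j * I j * s ^ j
        = ∑ j ∈ Finset.range (n + 1),
            ∫ u, n.choose j * s ^ j * (⟪a, u⟫ ^ (n - j) * ⟪b, u⟫ ^ j) ∂μ :=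
          Finset.sum_congr rfl fun j _ ↦ by rw [integral_const_mul]; ring
      _ = ∫ u, ∑ j ∈ Finset.range (n + 1),
            n.choose j * s ^ j * (⟪a, u⟫ ^ (n - j) * ⟪b, u⟫ ^ j) ∂μ :=
          (integral_finsetSum _ fun j _ ↦
            (integrable_inner_pow_mul_inner_pow hμ1 a b _ _).const_mul _).symm
      _ = ∫ u, ⟪a + s • b, u⟫ ^ n ∂μ := by
          congr 1 with u
          rw [inner_add_left, real_inner_smul_left, add_comm ⟪a, u⟫, add_pow]
          exact Finset.sum_congr rfl fun j _ ↦ by ring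
      _ = _ := by rw [hμ.integral_inner_pow ha, hnorm, mul_comm]
  have hpoly : (∑ j ∈ Finset.range (n + 1), Polynomial.C (n.choose j * I j) * Polynomial.X ^ j)
      = Polynomial.C (∫ u, ⟪a, u⟫ ^ n ∂μ) * (1 + Polynomial.X ^ 2) ^ (k + 1) :=
    Polynomial.funext fun s ↦ by
      simp only [Polynomial.eval_finsetSum, Polynomial.eval_mul, Polynomial.eval_C,
        Polynomial.eval_pow, Polynomial.eval_X, Polynomial.eval_add, Polynomial.eval_one]
      exact heval s
  have hcoeff := congrArg (Polynomial.coeff · 2) hpoly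
  simp only [Polynomial.finsetSum_coeff, Polynomial.coeff_C_mul, Polynomial.coeff_X_pow,
    Polynomial.coeff_two_one_add_X_sq_pow, mul_ite, mul_one, mul_zero, Finset.sum_ite_eq,
    Finset.mem_range, show 2 < n + 1 by omega, if_true] at hcoeff
  have hchoose : (n.choose 2 : ℝ) = (k + 1) * (2 * k + 1) := by
    rw [Nat.cast_choose_two]
    push_cast [n]
    ring
  have hI2 : I 2 = ∫ u, ⟪a, u⟫ ^ (2 * k) * ⟪b, u⟫ ^ 2 ∂μ := by
    simp only [I, show n - 2 = 2 * k by omega]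
  rw [hchoose, hI2, Nat.cast_succ, mul_assoc, mul_comm _ ((k : ℝ) + 1)] at hcoeff
  exact mul_left_cancel₀ (by positivity) hcoeff

variable {ι : Type*} [Fintype ι]

theorem IsIsometryInvariant.card_add_mul_integral_inner_pow_succ [IsFiniteMeasure μ]
    (hμ : IsIsometryInvariant μ) (hμ1 : ∀ᵐ u ∂μ, ‖u‖ = 1) (b : OrthonormalBasis ι ℝ E)
    (i : ι) (k : ℕ) :
    (Fintype.card ι + 2 * k) * ∫ u, ⟪b i, u⟫ ^ (2 * k + 2) ∂μ
      = (2 * k + 1) * ∫ u, ⟪b i, u⟫ ^ (2 * k) ∂μ := by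
  classical
  set M := ∫ u, ⟪b i, u⟫ ^ (2 * k + 2) ∂μ
  have hμ1' : ∀ᵐ u ∂μ, ‖u‖ ≤ 1 := hμ1.mono fun u hu ↦ hu.le
  have hsplit : ∫ u, ⟪b i, u⟫ ^ (2 * k) ∂μ = ∑ j, ∫ u, ⟪b i, u⟫ ^ (2 * k) * ⟪b j, u⟫ ^ 2 ∂μ := by
    rw [← integral_finsetSum _ fun j _ ↦ integrable_inner_pow_mul_inner_pow hμ1' _ _ _ _]
    refine integral_congr_ae ?_
    filter_upwards [hμ1] with u hu
    rw [← Finset.mul_sum, b.sum_sq_inner_right, hu]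
    ring
  have hdiag : ∫ u, ⟪b i, u⟫ ^ (2 * k) * ⟪b i, u⟫ ^ 2 ∂μ = M := by simp_rw [← pow_add]; rfl
  have hoff : ∀ j ∈ Finset.univ.erase i,
      (2 * k + 1) * ∫ u, ⟪b i, u⟫ ^ (2 * k) * ⟪b j, u⟫ ^ 2 ∂μ = M := fun j hj ↦
    hμ.two_mul_add_one_mul_integral_inner_pow_mul_inner_sq hμ1' (b.orthonormal.1 i)
      (b.orthonormal.1 j) (b.orthonormal.2 (Finset.ne_of_mem_erase hj).symm) k
  rw [hsplit, ← Finset.add_sum_erase _ _ (Finset.mem_univ i), hdiag, mul_add, Finset.mul_sum,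
    Finset.sum_congr rfl hoff, Finset.sum_const, Finset.card_erase_of_mem (Finset.mem_univ i),
    Finset.card_univ, nsmul_eq_mul, Nat.cast_pred (Fintype.card_pos_iff.mpr ⟨i⟩)]
  ring

theorem IsIsometryInvariant.integral_inner_pow_le [IsProbabilityMeasure μ]
    (hμ : IsIsometryInvariant μ) (hμ1 : ∀ᵐ u ∂μ, ‖u‖ = 1) (b : OrthonormalBasis ι ℝ E)
    (i : ι) (k : ℕ) :
    ∫ u, ⟪b i, u⟫ ^ (2 * k) ∂μ ≤ (2 * k / Fintype.card ι) ^ k := by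
  induction k with
  | zero => simp
  | succ k ih =>
    set d : ℝ := (Fintype.card ι : ℝ)
    have hd : 1 ≤ d := Nat.one_le_cast.mpr (Fintype.card_pos_iff.mpr ⟨i⟩)
    have hrec := hμ.card_add_mul_integral_inner_pow_succ hμ1 b i k
    set r : ℝ := 2 * (k + 1) / d
    have hr : 2 * k + 1 ≤ (d + 2 * k) * r := by
      rw [mul_div_assoc', le_div_iff₀ (by positivity)]
      nlinarith
    have hpow : (2 * k / d) ^ k ≤ r ^ k := by simp only [r]; gcongr; linarith
    refine le_of_mul_le_mul_left ?_ (by positivity : 0 < d + 2 * k)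
    calc (d + 2 * k) * ∫ u, ⟪b i, u⟫ ^ (2 * (k + 1)) ∂μ
        = (2 * k + 1) * ∫ u, ⟪b i, u⟫ ^ (2 * k) ∂μ := hrec
      _ ≤ (2 * k + 1) * r ^ k := by gcongr; exact ih.trans hpow
      _ ≤ (d + 2 * k) * r * r ^ k := by gcongr
      _ = (d + 2 * k) * (2 * ↑(k + 1) / d) ^ (k + 1) := by push_cast [r]; ring

end Invariant

theorem pi_norm_pow_le_sum_norm_pow {ι : Type*} [Fintype ι] [Nonempty ι] {F : ι → Type*}
    [∀ i, SeminormedAddCommGroup (F i)] (x : ∀ i, F i) (n : ℕ) : ‖x‖ ^ n ≤ ∑ i, ‖x i‖ ^ n := by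
  obtain ⟨i, -, hi⟩ := Finset.exists_mem_eq_sup Finset.univ Finset.univ_nonempty (‖x ·‖₊)
  have hxi : ‖x‖ = ‖x i‖ := by rw [Pi.norm_def, hi, coe_nnnorm]
  rw [hxi]
  exact Finset.single_le_sum (f := (‖x ·‖ ^ n)) (fun j _ ↦ by positivity) (Finset.mem_univ i)

theorem pow_integral_le_integral_pow {α : Type*} [MeasurableSpace α] {μ : Measure α}
    [IsProbabilityMeasure μ] {f : α → ℝ} (hf0 : 0 ≤ᵐ[μ] f) (hf : Integrable f μ) (m : ℕ)
    (hfm : Integrable (fun x ↦ f x ^ m) μ) : (∫ x, f x ∂μ) ^ m ≤ ∫ x, f x ^ m ∂μ :=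
  (convexOn_pow m).map_integral_le (continuous_pow m).continuousOn isClosed_Ici hf0 hf hfm

theorem integrable_norm_ofLp_pow {ι : Type*} [Fintype ι] {μ : Measure (EuclideanSpace ℝ ι)}
    [IsFiniteMeasure μ] (hμ1 : ∀ᵐ u ∂μ, ‖u‖ ≤ 1) (n : ℕ) :
    Integrable (fun u ↦ ‖WithLp.equiv 2 (ι → ℝ) u‖ ^ n) μ := by
  refine Integrable.of_bound
    ((continuous_norm.comp (PiLp.continuous_ofLp 2 _)).pow _).aestronglyMeasurable 1 ?_
  filter_upwards [hμ1] with u hu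
  have hle : ‖WithLp.equiv 2 (ι → ℝ) u‖ ≤ 1 :=
    (pi_norm_le_iff_of_nonneg zero_le_one).2 fun i ↦ (PiLp.norm_apply_le u i).trans hu
  rw [norm_pow, norm_norm]
  exact pow_le_one₀ (norm_nonneg _) hle

theorem IsIsometryInvariant.integral_norm_ofLp_pow_le {ι : Type*} [Fintype ι] [Nonempty ι]
    {μ : Measure (EuclideanSpace ℝ ι)} [IsProbabilityMeasure μ] (hμ : IsIsometryInvariant μ)
    (hμ1 : ∀ᵐ u ∂μ, ‖u‖ = 1) (k : ℕ) :
    ∫ u, ‖WithLp.equiv 2 (ι → ℝ) u‖ ^ (2 * k) ∂μ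
      ≤ Fintype.card ι * (2 * k / Fintype.card ι) ^ k := by
  have hμ1' : ∀ᵐ u ∂μ, ‖u‖ ≤ 1 := hμ1.mono fun u hu ↦ hu.le
  have hcoord (i : ι) : Integrable (fun u : EuclideanSpace ℝ ι ↦ u i ^ (2 * k)) μ := by
    simpa using integrable_inner_pow_mul_inner_pow hμ1'
      (EuclideanSpace.basisFun ι ℝ i) (EuclideanSpace.basisFun ι ℝ i) (2 * k) 0
  calc ∫ u, ‖WithLp.equiv 2 (ι → ℝ) u‖ ^ (2 * k) ∂μ
      ≤ ∫ u, ∑ i, u i ^ (2 * k) ∂μ := by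
        refine integral_mono (integrable_norm_ofLp_pow hμ1' _)
          (integrable_finsetSum _ fun i _ ↦ hcoord i) fun u ↦ ?_
        refine (pi_norm_pow_le_sum_norm_pow _ _).trans_eq (Finset.sum_congr rfl fun i _ ↦ ?_)
        simp [pow_mul]
    _ = ∑ i, ∫ u, ⟪EuclideanSpace.basisFun ι ℝ i, u⟫ ^ (2 * k) ∂μ := by
        simp only [EuclideanSpace.basisFun_inner]
        exact integral_finsetSum _ fun i _ ↦ hcoord i
    _ ≤ ∑ _i : ι, (2 * k / Fintype.card ι : ℝ) ^ k :=
        Finset.sum_le_sum fun i _ ↦ hμ.integral_inner_pow_le hμ1 _ i k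
    _ = Fintype.card ι * (2 * k / Fintype.card ι) ^ k := by simp

theorem mul_div_pow_two_mul_ceil_log_le {x : ℝ} (hx : 2 ≤ x) :
    x * (2 * (2 * ⌈log x⌉₊ : ℕ) / x) ^ (2 * ⌈log x⌉₊) ≤ (5 ^ 4 * (log x / x) ^ 2) ^ ⌈log x⌉₊ := by
  set L := log x
  set m := ⌈L⌉₊
  have hL : 0.69 < L := (log_two_gt_d9.trans_le' (by norm_num)).trans_le
    (log_le_log two_pos hx)
  have hm : (m : ℝ) ≤ L + 1 := (Nat.ceil_lt_add_one (by linarith)).le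
  have hx_le : x ≤ exp 1 ^ m := by
    rw [← exp_nat_mul, mul_one, ← exp_log (by linarith : 0 < x)]
    exact exp_le_exp.mpr (Nat.le_ceil L)
  have hbase : exp 1 * (16 * m ^ 2) ≤ 5 ^ 4 * L ^ 2 := by
    have hm2 : (m : ℝ) ^ 2 ≤ (L + 1) ^ 2 := by gcongr
    nlinarith [exp_one_lt_d9, exp_pos 1]
  calc x * (2 * (2 * m : ℕ) / x) ^ (2 * m)
      ≤ exp 1 ^ m * (16 * m ^ 2 / x ^ 2) ^ m := by
        rw [pow_mul, show (2 * (2 * m : ℕ) / x) ^ 2 = 16 * m ^ 2 / x ^ 2 by push_cast; ring]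
        gcongr
    _ = (exp 1 * (16 * m ^ 2) / x ^ 2) ^ m := by rw [← mul_pow]; ring
    _ ≤ (5 ^ 4 * (L / x) ^ 2) ^ m := by
        refine pow_le_pow_left₀ (by positivity) ?_ m
        rw [div_pow, ← mul_div_assoc]
        gcongr

/-- For `u` uniform on the Euclidean unit sphere in `ℝ^d`, `d > 1`:
`(E[‖u‖_∞⁴])^{1/4} ≤ c √(log d / d)` for a positive numerical constant `c`. -/
theorem stmt9 : ∃ c : ℝ, 0 < c ∧
    ∀ (d : ℕ), 1 < d →
    ∀ (μ : Measure (EuclideanSpace ℝ (Fin d))), IsProbabilityMeasure μ →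
    (∀ᵐ u ∂μ, ‖u‖ = 1) →
    (∀ T : EuclideanSpace ℝ (Fin d) ≃ₗᵢ[ℝ] EuclideanSpace ℝ (Fin d), μ.map T = μ) →
    (∫ u, ‖(WithLp.equiv 2 (Fin d → ℝ)) u‖ ^ 4 ∂μ) ^ ((1 : ℝ) / 4)
      ≤ c * Real.sqrt (Real.log d / d) := by
  refine ⟨5, by norm_num, fun d hd μ _ hμ1 hμ ↦ ?_⟩
  have : Nonempty (Fin d) := ⟨⟨0, by omega⟩⟩
  set f : EuclideanSpace ℝ (Fin d) → ℝ := fun u ↦ ‖WithLp.equiv 2 (Fin d → ℝ) u‖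
  set m := ⌈log d⌉₊
  have hm : m ≠ 0 := (Nat.ceil_pos.mpr (log_pos (by exact_mod_cast hd))).ne'
  have hint := integrable_norm_ofLp_pow (hμ1.mono fun u hu ↦ hu.le)
  have hmoment : (∫ u, f u ^ 4 ∂μ) ^ m ≤ (5 ^ 4 * (log d / d) ^ 2) ^ m := by
    calc (∫ u, f u ^ 4 ∂μ) ^ m ≤ ∫ u, (f u ^ 4) ^ m ∂μ :=
          pow_integral_le_integral_pow (.of_forall fun u ↦ by positivity) (hint 4) m
            (by simpa only [← pow_mul] using hint (4 * m))
      _ = ∫ u, f u ^ (2 * (2 * m)) ∂μ := by simp_rw [← pow_mul]; ring_nf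
      _ ≤ d * (2 * (2 * m : ℕ) / d) ^ (2 * m) := by
          simpa [f] using IsIsometryInvariant.integral_norm_ofLp_pow_le hμ hμ1 (2 * m)
      _ ≤ _ := mul_div_pow_two_mul_ceil_log_le (by exact_mod_cast hd)
  have hnonneg : 0 ≤ ∫ u, f u ^ 4 ∂μ := integral_nonneg fun u ↦ by positivity
  rw [one_div, rpow_inv_le_iff_of_pos hnonneg (by positivity) four_pos,
    show (4 : ℝ) = (4 : ℕ) by norm_num, rpow_natCast, mul_pow,
    show sqrt (log d / d) ^ 4 = (log d / d) ^ 2 by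
      rw [show 4 = 2 * 2 by rfl, pow_mul, sq_sqrt (by positivity)]]
  exact (pow_le_pow_iff_left₀ hnonneg (by positivity) hm).1 hmoment
end

section
/- Let n be a standard Gaussian random vector in R^d with d > 1. Then E[||n||_∞^4] ≤ 4(2 + 2 log(d) + log^2(d)). -/
/-!
Layer cake: `E ‖n‖⁴ = 4 ∫₀^∞ t³ P(‖n‖ ≥ t) dt`. Below `r = √(2 log d)` bound the probability by
`1`, which contributes `r⁴ = 4 log² d`. Above `r` use the union bound over the coordinates and the
Mills-ratio tail `P(|g| ≥ t) ≤ exp (-t² / 2)` (valid for `t ≥ 1`); since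
`∫_r^∞ t³ exp (-t² / 2) dt = (r² + 2) exp (-r² / 2) = (2 log d + 2) / d`, the factor `d` cancels.
-/

open MeasureTheory Real ProbabilityTheory Set Filter Topology

lemma integrable_pow_three_mul_exp_neg_sq_div_two :
    Integrable fun t : ℝ => t ^ 3 * exp (-t ^ 2 / 2) := by
  refine (integrable_rpow_mul_exp_neg_mul_sq (by norm_num : (0:ℝ) < 1 / 2)
    (by norm_num : (-1:ℝ) < 3)).congr (ae_of_all _ fun t => ?_)
  simp only
  norm_cast
  ring_nf

lemma integral_Ioi_pow_three_mul_exp_neg_sq_div_two (r : ℝ) :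
    ∫ t in Ioi r, t ^ 3 * exp (-t ^ 2 / 2) = (r ^ 2 + 2) * exp (-r ^ 2 / 2) := by
  have hsq : Tendsto (fun t : ℝ => t ^ 2 / 2) atTop atTop :=
    (tendsto_pow_atTop two_ne_zero).atTop_div_const two_pos
  have hderiv (t : ℝ) : HasDerivAt (fun t => -(t ^ 2 + 2) * exp (-t ^ 2 / 2))
      (t ^ 3 * exp (-t ^ 2 / 2)) t := by
    refine (((hasDerivAt_pow 2 t).add_const 2).fun_neg.fun_mul
      ((hasDerivAt_pow 2 t).fun_neg.div_const 2).exp).congr_deriv ?_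
    norm_num
    ring
  have hlim : Tendsto (fun t : ℝ => -(t ^ 2 + 2) * exp (-t ^ 2 / 2)) atTop (𝓝 0) := by
    have h1 : Tendsto (fun u : ℝ => -(2 * (u * exp (-u)) + 2 * exp (-u))) atTop (𝓝 0) := by
      simpa using (((tendsto_pow_mul_exp_neg_atTop_nhds_zero 1).const_mul 2).add
        (tendsto_exp_neg_atTop_nhds_zero.const_mul 2)).neg
    refine (h1.comp hsq).congr fun t => ?_
    simp only [Function.comp_apply]
    ring_nf
  rw [integral_Ioi_of_hasDerivAt_of_tendsto' (fun t _ => hderiv t)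
    integrable_pow_three_mul_exp_neg_sq_div_two.integrableOn hlim]
  ring

lemma gaussianReal_Ici_le {t : ℝ} (ht : 0 < t) :
    gaussianReal 0 1 (Ici t) ≤ ENNReal.ofReal (exp (-t ^ 2 / 2) / (t * √(2 * π))) := by
  have hpdf (y : ℝ) : gaussianPDFReal 0 1 y = (√(2 * π))⁻¹ * exp (-y ^ 2 / 2) := by
    simp [gaussianPDFReal]
  have hdom (y : ℝ) : gaussianPDFReal 0 1 y ≤ (√(2 * π))⁻¹ * exp (t ^ 2 / 2) * exp (-t * y) := by
    rw [hpdf, mul_assoc, ← exp_add]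
    gcongr
    nlinarith [sq_nonneg (y - t)]
  have hexp : IntegrableOn (fun y => (√(2 * π))⁻¹ * exp (t ^ 2 / 2) * exp (-t * y)) (Ioi t) :=
    (integrableOn_exp_mul_Ioi (neg_neg_of_pos ht) t).const_mul _
  rw [gaussianReal_apply_eq_integral 0 one_ne_zero, integral_Ici_eq_integral_Ioi]
  gcongr
  calc ∫ y in Ioi t, gaussianPDFReal 0 1 y
      ≤ ∫ y in Ioi t, (√(2 * π))⁻¹ * exp (t ^ 2 / 2) * exp (-t * y) :=
        setIntegral_mono_on (integrable_gaussianPDFReal 0 1).integrableOn hexp measurableSet_Ioi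
          fun y _ => hdom y
    _ = exp (-t ^ 2 / 2) / (t * √(2 * π)) := by
        have : exp (-t ^ 2 / 2) = exp (t ^ 2 / 2) * exp (-t * t) := by rw [← exp_add]; ring_nf
        rw [integral_const_mul, integral_exp_mul_Ioi (neg_neg_of_pos ht), this]
        field_simp

lemma gaussianReal_Iic_neg (t : ℝ) : gaussianReal 0 1 (Iic (-t)) = gaussianReal 0 1 (Ici t) := by
  conv_lhs => rw [← neg_zero, ← gaussianReal_map_neg]
  rw [Measure.map_apply measurable_neg measurableSet_Iic]
  congr 1
  ext y
  simp

lemma gaussianReal_le_abs_le {t : ℝ} (ht : 1 ≤ t) :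
    gaussianReal 0 1 {y | t ≤ |y|} ≤ ENNReal.ofReal (exp (-t ^ 2 / 2)) := by
  have ht0 : 0 < t := one_pos.trans_le ht
  have h2π : 2 ≤ t * √(2 * π) := by
    have : 2 ≤ √(2 * π) := Real.le_sqrt_of_sq_le (by nlinarith [pi_gt_three])
    nlinarith
  have hsplit : {y : ℝ | t ≤ |y|} = Iic (-t) ∪ Ici t := by
    ext y
    simp [le_abs', or_comm]
  calc gaussianReal 0 1 {y | t ≤ |y|}
      ≤ gaussianReal 0 1 (Iic (-t)) + gaussianReal 0 1 (Ici t) :=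
        hsplit ▸ measure_union_le _ _
    _ ≤ 2 * ENNReal.ofReal (exp (-t ^ 2 / 2) / (t * √(2 * π))) := by
        rw [gaussianReal_Iic_neg, ← two_mul]
        gcongr
        exact gaussianReal_Ici_le ht0
    _ ≤ ENNReal.ofReal (exp (-t ^ 2 / 2)) := by
        rw [← ENNReal.ofReal_ofNat 2, ← ENNReal.ofReal_mul zero_le_two]
        gcongr
        rw [mul_div_assoc']
        exact div_le_of_le_mul₀ (by positivity) (by positivity)
          (by nlinarith [exp_pos (-t ^ 2 / 2)])

lemma measure_pi_le_norm_le {ι E : Type*} [Fintype ι] [NormedAddCommGroup E] [MeasurableSpace E]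
    [OpensMeasurableSpace E] (ν : Measure E) [IsProbabilityMeasure ν] {t : ℝ} (ht : 0 < t) :
    Measure.pi (fun _ : ι => ν) {x | t ≤ ‖x‖} ≤ Fintype.card ι * ν {y | t ≤ ‖y‖} := by
  have hsub : {x : ι → E | t ≤ ‖x‖} ⊆ ⋃ i, Function.eval i ⁻¹' {y | t ≤ ‖y‖} := by
    intro x hx
    by_contra hlt
    simp only [mem_iUnion, mem_preimage, mem_ofPred_eq, Function.eval, not_exists, not_le] at hlt
    exact (not_le.2 ((pi_norm_lt_iff ht).2 hlt)) hx
  have hmeas : MeasurableSet {y : E | t ≤ ‖y‖} := measurableSet_le measurable_const measurable_norm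
  calc Measure.pi (fun _ : ι => ν) {x | t ≤ ‖x‖}
      ≤ ∑ i, Measure.pi (fun _ : ι => ν) (Function.eval i ⁻¹' {y | t ≤ ‖y‖}) :=
        (measure_mono hsub).trans (measure_iUnion_fintype_le _ _)
    _ = ∑ _i : ι, ν {y | t ≤ ‖y‖} := Finset.sum_congr rfl fun i _ =>
        (measurePreserving_eval (fun _ : ι => ν) i).measure_preimage hmeas.nullMeasurableSet
    _ = Fintype.card ι * ν {y | t ≤ ‖y‖} := by simp

lemma lintegral_Ioc_pow_three {r : ℝ} (hr : 0 ≤ r) :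
    ∫⁻ t in Ioc 0 r, ENNReal.ofReal (t ^ 3) = ENNReal.ofReal (r ^ 4 / 4) := by
  rw [← ofReal_integral_eq_lintegral_ofReal (continuous_pow 3).integrableOn_Ioc
    ((ae_restrict_iff' measurableSet_Ioc).2 (ae_of_all _ fun t ht => pow_nonneg ht.1.le 3)),
    ← intervalIntegral.integral_of_le hr, integral_pow]
  norm_num

lemma lintegral_Ioi_pow_three_mul_exp_neg_sq_div_two {r : ℝ} (hr : 0 ≤ r) :
    ∫⁻ t in Ioi r, ENNReal.ofReal (t ^ 3 * exp (-t ^ 2 / 2))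
      = ENNReal.ofReal ((r ^ 2 + 2) * exp (-r ^ 2 / 2)) := by
  rw [← ofReal_integral_eq_lintegral_ofReal integrable_pow_three_mul_exp_neg_sq_div_two.integrableOn
    ((ae_restrict_iff' measurableSet_Ioi).2 (ae_of_all _ fun t ht =>
      mul_nonneg (pow_nonneg (hr.trans ht.le) 3) (exp_pos _).le)),
    integral_Ioi_pow_three_mul_exp_neg_sq_div_two]

theorem integral_pow_four_le_of_subgaussian_tail {Ω : Type*} [MeasurableSpace Ω] {μ : Measure Ω}
    [IsProbabilityMeasure μ] {X : Ω → ℝ} (hX0 : 0 ≤ᵐ[μ] X) (hX : AEMeasurable X μ) {C r : ℝ}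
    (hC : 0 ≤ C) (hr : 0 ≤ r)
    (htail : ∀ t, r < t → μ {ω | t ≤ X ω} ≤ ENNReal.ofReal (C * exp (-t ^ 2 / 2))) :
    ∫ ω, X ω ^ 4 ∂μ ≤ r ^ 4 + 4 * C * ((r ^ 2 + 2) * exp (-r ^ 2 / 2)) := by
  have hlayer : ∫⁻ ω, ENNReal.ofReal (X ω ^ 4) ∂μ
      = 4 * ∫⁻ t in Ioi 0, μ {ω | t ≤ X ω} * ENNReal.ofReal (t ^ 3) := by
    have := lintegral_rpow_eq_lintegral_meas_le_mul μ hX0 hX (p := 4) four_pos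
    norm_num at this
    exact_mod_cast this
  have hsmall : ∫⁻ t in Ioc 0 r, μ {ω | t ≤ X ω} * ENNReal.ofReal (t ^ 3)
      ≤ ENNReal.ofReal (r ^ 4 / 4) :=
    (lintegral_mono fun t => mul_le_of_le_one_left' prob_le_one).trans_eq
      (lintegral_Ioc_pow_three hr)
  have hlarge : ∫⁻ t in Ioi r, μ {ω | t ≤ X ω} * ENNReal.ofReal (t ^ 3)
      ≤ ENNReal.ofReal C * ENNReal.ofReal ((r ^ 2 + 2) * exp (-r ^ 2 / 2)) := by
    calc ∫⁻ t in Ioi r, μ {ω | t ≤ X ω} * ENNReal.ofReal (t ^ 3)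
        ≤ ∫⁻ t in Ioi r, ENNReal.ofReal C * ENNReal.ofReal (t ^ 3 * exp (-t ^ 2 / 2)) := by
          refine setLIntegral_mono' measurableSet_Ioi fun t ht => ?_
          have ht0 : 0 ≤ t := hr.trans (le_of_lt ht)
          rw [← ENNReal.ofReal_mul hC, ← mul_assoc, mul_right_comm,
            ENNReal.ofReal_mul (by positivity)]
          gcongr
          exact htail t ht
      _ = _ := by
          rw [lintegral_const_mul' _ _ ENNReal.ofReal_ne_top,
            lintegral_Ioi_pow_three_mul_exp_neg_sq_div_two hr]
  rw [integral_eq_lintegral_of_nonneg_ae (ae_of_all _ fun ω => by positivity)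
    (hX.pow_const 4).aestronglyMeasurable]
  refine ENNReal.toReal_le_of_le_ofReal (by positivity) ?_
  rw [hlayer, ← Ioc_union_Ioi_eq_Ioi hr,
    lintegral_union measurableSet_Ioi (Ioc_disjoint_Ioi le_rfl)]
  calc _ ≤ 4 * (ENNReal.ofReal (r ^ 4 / 4)
        + ENNReal.ofReal C * ENNReal.ofReal ((r ^ 2 + 2) * exp (-r ^ 2 / 2))) := by gcongr
    _ = _ := by
        rw [← ENNReal.ofReal_mul hC, ← ENNReal.ofReal_add (by positivity) (by positivity),
          ← ENNReal.ofReal_ofNat 4, ← ENNReal.ofReal_mul zero_le_four]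
        congr 1
        ring

/-- For a standard Gaussian vector `n` in `ℝ^d`, `d > 1`:
`E[‖n‖_∞⁴] ≤ 4(2 + 2 log d + log² d)`. (Here `‖·‖` on `Fin d → ℝ` is the sup norm.) -/
theorem stmt11 (d : ℕ) (hd : 1 < d) :
    ∫ x, ‖x‖ ^ 4 ∂(Measure.pi fun _ : Fin d => gaussianReal 0 1)
      ≤ 4 * (2 + 2 * Real.log d + Real.log d ^ 2) := by
  set L := Real.log d
  have hL : 1 / 2 ≤ L := by
    have := log_le_log two_pos (by exact_mod_cast hd : (2 : ℝ) ≤ d)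
    linarith [log_two_gt_d9]
  set r := √(2 * L)
  have hr2 : r ^ 2 = 2 * L := sq_sqrt (by linarith)
  have hr1 : 1 ≤ r := one_le_sqrt.2 (by linarith)
  have hexp : exp (-r ^ 2 / 2) = (d : ℝ)⁻¹ := by
    rw [hr2, show -(2 * L) / 2 = -L by ring, exp_neg, exp_log (by positivity)]
  have htail (t : ℝ) (ht : r < t) : (Measure.pi fun _ : Fin d => gaussianReal 0 1) {x | t ≤ ‖x‖}
      ≤ ENNReal.ofReal (d * exp (-t ^ 2 / 2)) := by
    calc _ ≤ Fintype.card (Fin d) * gaussianReal 0 1 {y | t ≤ ‖y‖} :=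
          measure_pi_le_norm_le _ (by linarith)
      _ ≤ d * ENNReal.ofReal (exp (-t ^ 2 / 2)) := by
          simp_rw [Fintype.card_fin, Real.norm_eq_abs]
          gcongr
          exact gaussianReal_le_abs_le (by linarith)
      _ = _ := by rw [ENNReal.ofReal_mul (by positivity), ENNReal.ofReal_natCast]
  calc _ ≤ r ^ 4 + 4 * d * ((r ^ 2 + 2) * exp (-r ^ 2 / 2)) :=
        integral_pow_four_le_of_subgaussian_tail (ae_of_all _ fun x => norm_nonneg x)
          measurable_norm.aemeasurable d.cast_nonneg (by positivity) htail
    _ = _ := by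
        rw [hexp, show r ^ 4 = (r ^ 2) ^ 2 by ring, hr2]
        field_simp
        ring
end

section
/- For any nonnegative random variable Y and any r ≥ 0, if Pr(Y > z^{1/4}) ≤ d exp(-sqrt(z)/2) for all z ≥ r, then E[Y^4] ≤ r + 4d(2 + sqrt(r)) exp(-sqrt(r)/2). -/
/-!
By the layer-cake formula, `E[Y⁴] = ∫_{t > 0} Pr(Y⁴ > t) dt`. Bound the integrand by `1` on `(0, r]`
and by the tail hypothesis on `(r, ∞)`; the resulting integral is explicit because
`-4 (2 + √t) exp(-√t/2)` is a primitive of `exp(-√t/2)` vanishing at infinity.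
-/

open MeasureTheory Real Set Filter Topology

lemma hasDerivAt_neg_four_mul_two_add_sqrt_mul_exp {t : ℝ} (ht : 0 < t) :
    HasDerivAt (fun x => -4 * (2 + √x) * exp (-√x / 2)) (exp (-√t / 2)) t := by
  have hsqrt := hasDerivAt_sqrt ht.ne'
  refine ((((hasDerivAt_const t 2).add hsqrt).const_mul (-4)).mul
    (hsqrt.neg.div_const 2).exp).congr_deriv ?_
  simp only [Pi.add_apply, Pi.neg_apply, zero_add]
  field_simp
  ring

lemma tendsto_neg_four_mul_two_add_sqrt_mul_exp_atTop :
    Tendsto (fun x => -4 * (2 + √x) * exp (-√x / 2)) atTop (𝓝 0) := by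
  have hexp := tendsto_rpow_mul_exp_neg_mul_atTop_nhds_zero 0 (1 / 2) one_half_pos
  have hlin := tendsto_rpow_mul_exp_neg_mul_atTop_nhds_zero 1 (1 / 2) one_half_pos
  have h := ((hexp.const_mul (-8)).add (hlin.const_mul (-4))).comp tendsto_sqrt_atTop
  rw [mul_zero, mul_zero, add_zero] at h
  refine h.congr fun x => ?_
  simp only [Function.comp_apply, rpow_zero, rpow_one]
  ring_nf

lemma integrableOn_Ioi_exp_neg_sqrt_div_two {r : ℝ} (hr : 0 ≤ r) :
    IntegrableOn (fun t => exp (-√t / 2)) (Ioi r) :=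
  integrableOn_Ioi_deriv_of_nonneg (by fun_prop)
    (fun _ ht => hasDerivAt_neg_four_mul_two_add_sqrt_mul_exp (hr.trans_lt ht))
    (fun _ _ => (exp_pos _).le) tendsto_neg_four_mul_two_add_sqrt_mul_exp_atTop

lemma integral_Ioi_exp_neg_sqrt_div_two {r : ℝ} (hr : 0 ≤ r) :
    ∫ t in Ioi r, exp (-√t / 2) = 4 * (2 + √r) * exp (-√r / 2) := by
  rw [integral_Ioi_of_hasDerivAt_of_nonneg (by fun_prop)
    (fun _ ht => hasDerivAt_neg_four_mul_two_add_sqrt_mul_exp (hr.trans_lt ht))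
    (fun _ _ => (exp_pos _).le) tendsto_neg_four_mul_two_add_sqrt_mul_exp_atTop]
  ring

theorem integral_le_add_setIntegral_of_meas_lt_le {Ω : Type*} [MeasurableSpace Ω]
    {μ : Measure Ω} [IsProbabilityMeasure μ] {X : Ω → ℝ} (hX0 : 0 ≤ᵐ[μ] X)
    (hX : AEMeasurable X μ) {g : ℝ → ℝ} {r : ℝ} (hr : 0 ≤ r) (hg : IntegrableOn g (Ioi r))
    (hg0 : ∀ t > r, 0 ≤ g t) (htail : ∀ t > r, μ {ω | t < X ω} ≤ ENNReal.ofReal (g t)) :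
    ∫ ω, X ω ∂μ ≤ r + ∫ t in Ioi r, g t := by
  have hg0' : 0 ≤ᵐ[volume.restrict (Ioi r)] g := ae_restrict_of_forall_mem measurableSet_Ioi hg0
  have hbulk : ∫⁻ t in Ioc 0 r, μ {ω | t < X ω} ≤ ENNReal.ofReal r :=
    calc ∫⁻ t in Ioc 0 r, μ {ω | t < X ω} ≤ ∫⁻ _ in Ioc 0 r, 1 := lintegral_mono fun _ => prob_le_one
      _ = ENNReal.ofReal r := by rw [setLIntegral_one, volume_Ioc, sub_zero]
  have htail' : ∫⁻ t in Ioi r, μ {ω | t < X ω} ≤ ENNReal.ofReal (∫ t in Ioi r, g t) := by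
    rw [ofReal_integral_eq_lintegral_ofReal hg hg0']
    exact setLIntegral_mono' measurableSet_Ioi htail
  have hlintegral : ∫⁻ ω, ENNReal.ofReal (X ω) ∂μ ≤ ENNReal.ofReal (r + ∫ t in Ioi r, g t) := by
    rw [lintegral_eq_lintegral_meas_lt μ hX0 hX, ← Ioc_union_Ioi_eq_Ioi hr,
      lintegral_union measurableSet_Ioi (Ioc_disjoint_Ioi le_rfl),
      ENNReal.ofReal_add hr (integral_nonneg_of_ae hg0')]
    exact add_le_add hbulk htail'
  rw [integral_eq_lintegral_of_nonneg_ae hX0 hX.aestronglyMeasurable]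
  exact ENNReal.toReal_le_of_le_ofReal (add_nonneg hr (integral_nonneg_of_ae hg0')) hlintegral

lemma rpow_inv_natCast_lt_of_lt_pow {t y : ℝ} {n : ℕ} (ht : 0 ≤ t) (hy : 0 ≤ y) (hn : n ≠ 0)
    (h : t < y ^ n) : t ^ (n⁻¹ : ℝ) < y :=
  pow_rpow_inv_natCast hy hn ▸ rpow_lt_rpow ht h (by positivity)

/-- Tail-integration bound: if `Pr(Y > z^{1/4}) ≤ d exp(-√z/2)` for all `z ≥ r`, then
`E[Y⁴] ≤ r + 4d(2 + √r) exp(-√r/2)`. -/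
theorem stmt12 {Ω : Type*} [MeasurableSpace Ω] (μ : Measure Ω) [IsProbabilityMeasure μ]
    (Y : Ω → ℝ) (hY : ∀ ω, 0 ≤ Y ω)
    (hint : Integrable (fun ω => Y ω ^ 4) μ)
    (d r : ℝ) (hd : 0 < d) (hr : 0 ≤ r)
    (htail : ∀ z ≥ r, μ {ω | Y ω > z ^ ((1 : ℝ) / 4)}
      ≤ ENNReal.ofReal (d * Real.exp (-Real.sqrt z / 2))) :
    ∫ ω, Y ω ^ 4 ∂μ
      ≤ r + 4 * d * (2 + Real.sqrt r) * Real.exp (-Real.sqrt r / 2) := by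
  have htail4 : ∀ t > r, μ {ω | t < Y ω ^ 4} ≤ ENNReal.ofReal (d * exp (-√t / 2)) := by
    refine fun t ht => (measure_mono fun ω hω => ?_).trans (htail t ht.le)
    have := rpow_inv_natCast_lt_of_lt_pow (hr.trans ht.le) (hY ω) four_ne_zero hω
    simpa [one_div] using this
  calc ∫ ω, Y ω ^ 4 ∂μ ≤ r + ∫ t in Ioi r, d * exp (-√t / 2) :=
        integral_le_add_setIntegral_of_meas_lt_le (ae_of_all _ fun ω => by positivity)
          hint.aemeasurable hr ((integrableOn_Ioi_exp_neg_sqrt_div_two hr).const_mul d)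
          (fun _ _ => by positivity) htail4
    _ = r + 4 * d * (2 + √r) * exp (-√r / 2) := by
        rw [integral_const_mul, integral_Ioi_exp_neg_sqrt_div_two hr]
        ring
end
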